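/- arXiv:2504.17008 — 7 statements merged into one kernel-verified Lean document; each statement's English description precedes it below -/
import Mathlib

section
/- Let γ > 0 and let φ : [0,∞) → ℝ be strictly increasing on [0,∞) such that ψ(z) = φ(e^z) is convex on ℝ. Then for all g, f ∈ F_γ, the functional density power divergence is nonnegative: D_{φ,γ}(g,f) = (1/γ)φ(⟨g^{1+γ}⟩) − ((1+γ)/γ)φ(⟨g f^γ⟩) + φ(⟨f^{1+γ}⟩) ≥ 0. -/
open MeasureTheory

/-- `⟨g^{1+γ}⟩`, `⟨g f^γ⟩`, `⟨f^{1+γ}⟩`-based functional density power divergence. -/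
noncomputable def FDPD {X : Type*} [MeasurableSpace X] (ν : Measure X)
    (φ : ℝ → ℝ) (γ : ℝ) (g f : X → NNReal) : ℝ :=
  (1 / γ) * φ (∫⁻ x, (g x : ENNReal) ^ (1 + γ) ∂ν).toReal
    - ((1 + γ) / γ) * φ (∫⁻ x, (g x : ENNReal) * (f x : ENNReal) ^ γ ∂ν).toReal
    + φ (∫⁻ x, (f x : ENNReal) ^ (1 + γ) ∂ν).toReal

/-- Membership in the class `F_γ`: measurable, not a.e. zero, with `⟨g^{1+γ}⟩ < ∞`. -/
def MemF {X : Type*} [MeasurableSpace X] (ν : Measure X) (γ : ℝ) (g : X → NNReal) : Prop :=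
  Measurable g ∧ ¬ (g =ᵐ[ν] 0) ∧ (∫⁻ x, (g x : ENNReal) ^ (1 + γ) ∂ν) ≠ ⊤

/-! By Hölder's inequality with exponents `1 + γ` and `(1 + γ) / γ`,
`⟨g f^γ⟩ ≤ ⟨g^{1+γ}⟩^{1/(1+γ)} ⟨f^{1+γ}⟩^{γ/(1+γ)}`, a weighted geometric mean. Since `φ` is
monotone and `φ ∘ exp` is convex, `φ` of a weighted geometric mean is at most the weighted
arithmetic mean of the values of `φ`, which rearranges to `D_{φ,γ}(g, f) ≥ 0`. -/

open scoped NNReal ENNReal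

theorem ConvexOn.map_rpow_mul_rpow_le {φ : ℝ → ℝ}
    (hψ : ConvexOn ℝ Set.univ (fun z : ℝ => φ (Real.exp z)))
    {a c s t : ℝ} (ha : 0 < a) (hc : 0 < c) (hs : 0 ≤ s) (ht : 0 ≤ t) (hst : s + t = 1) :
    φ (a ^ s * c ^ t) ≤ s * φ a + t * φ c := by
  have h := hψ.2 (Set.mem_univ (Real.log a)) (Set.mem_univ (Real.log c)) hs ht hst
  simp only [smul_eq_mul, Real.exp_log ha, Real.exp_log hc] at h
  rwa [Real.rpow_def_of_pos ha, Real.rpow_def_of_pos hc, ← Real.exp_add, mul_comm (Real.log a),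
    mul_comm (Real.log c)]

section Lintegral

variable {X : Type*} [MeasurableSpace X] {ν : Measure X}

theorem lintegral_coe_rpow_ne_zero {p : ℝ} (hp : 0 < p) {g : X → ℝ≥0} (hg : AEMeasurable g ν)
    (hg0 : ¬ g =ᵐ[ν] 0) : ∫⁻ x, (g x : ℝ≥0∞) ^ p ∂ν ≠ 0 := by
  rw [Ne, lintegral_eq_zero_iff' (by fun_prop)]
  refine fun h => hg0 (h.mono fun x hx => ?_)
  simpa [ENNReal.rpow_eq_zero_iff, hp, hp.not_gt] using hx

/-- Hölder's inequality with the conjugate exponents `1 + γ` and `(1 + γ) / γ`. -/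
theorem lintegral_mul_rpow_le {γ : ℝ} (hγ : 0 < γ) {g f : X → ℝ≥0∞}
    (hg : AEMeasurable g ν) (hf : AEMeasurable f ν) :
    ∫⁻ x, g x * f x ^ γ ∂ν ≤
      (∫⁻ x, g x ^ (1 + γ) ∂ν) ^ (1 / (1 + γ)) * (∫⁻ x, f x ^ (1 + γ) ∂ν) ^ (γ / (1 + γ)) := by
  have hpq : (1 + γ).HolderConjugate ((1 + γ) / γ) := by
    rw [Real.holderConjugate_iff]
    exact ⟨by linarith, by field_simp⟩
  have h := ENNReal.lintegral_mul_le_Lp_mul_Lq ν hpq hg (hf.pow_const γ)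
  have hpow : ∀ x, (f x ^ γ) ^ ((1 + γ) / γ) = f x ^ (1 + γ) := fun x => by
    rw [← ENNReal.rpow_mul, mul_div_cancel₀ _ hγ.ne']
  have hexp : 1 / ((1 + γ) / γ) = γ / (1 + γ) := one_div_div _ _
  simpa only [Pi.mul_apply, hpow, hexp] using h

theorem toReal_lintegral_mul_rpow_le {γ : ℝ} (hγ : 0 < γ) {g f : X → ℝ≥0∞}
    (hg : AEMeasurable g ν) (hf : AEMeasurable f ν)
    (hg_top : ∫⁻ x, g x ^ (1 + γ) ∂ν ≠ ⊤) (hf_top : ∫⁻ x, f x ^ (1 + γ) ∂ν ≠ ⊤) :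
    (∫⁻ x, g x * f x ^ γ ∂ν).toReal ≤
      (∫⁻ x, g x ^ (1 + γ) ∂ν).toReal ^ (1 / (1 + γ)) *
        (∫⁻ x, f x ^ (1 + γ) ∂ν).toReal ^ (γ / (1 + γ)) := by
  have hγ' : 0 < 1 + γ := by linarith
  have h_top : (∫⁻ x, g x ^ (1 + γ) ∂ν) ^ (1 / (1 + γ)) *
      (∫⁻ x, f x ^ (1 + γ) ∂ν) ^ (γ / (1 + γ)) ≠ ⊤ :=
    ENNReal.mul_ne_top (ENNReal.rpow_ne_top_of_nonneg (by positivity) hg_top)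
      (ENNReal.rpow_ne_top_of_nonneg (by positivity) hf_top)
  simpa only [ENNReal.toReal_mul, ← ENNReal.toReal_rpow] using
    ENNReal.toReal_mono h_top (lintegral_mul_rpow_le hγ hg hf)

end Lintegral

theorem fdpd_nonneg {X : Type*} [MeasurableSpace X] (ν : Measure X) (γ : ℝ) (hγ : 0 < γ)
    (φ : ℝ → ℝ) (hφ : StrictMonoOn φ (Set.Ici (0 : ℝ)))
    (hψ : ConvexOn ℝ Set.univ (fun z : ℝ => φ (Real.exp z)))
    (g f : X → NNReal) (hg : MemF ν γ g) (hf : MemF ν γ f) :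
    0 ≤ FDPD ν φ γ g f := by
  obtain ⟨hg_meas, hg0, hg_top⟩ := hg
  obtain ⟨hf_meas, hf0, hf_top⟩ := hf
  have hγ' : 0 < 1 + γ := by linarith
  set a := (∫⁻ x, (g x : ℝ≥0∞) ^ (1 + γ) ∂ν).toReal
  set b := (∫⁻ x, (g x : ℝ≥0∞) * (f x : ℝ≥0∞) ^ γ ∂ν).toReal
  set c := (∫⁻ x, (f x : ℝ≥0∞) ^ (1 + γ) ∂ν).toReal
  have ha : 0 < a :=
    ENNReal.toReal_pos (lintegral_coe_rpow_ne_zero hγ' hg_meas.aemeasurable hg0) hg_top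
  have hc : 0 < c :=
    ENNReal.toReal_pos (lintegral_coe_rpow_ne_zero hγ' hf_meas.aemeasurable hf0) hf_top
  have holder : b ≤ a ^ (1 / (1 + γ)) * c ^ (γ / (1 + γ)) :=
    toReal_lintegral_mul_rpow_le hγ (by fun_prop) (by fun_prop) hg_top hf_top
  have jensen : φ b ≤ 1 / (1 + γ) * φ a + γ / (1 + γ) * φ c :=
    (hφ.monotoneOn (Set.mem_Ici.2 ENNReal.toReal_nonneg) (Set.mem_Ici.2 (by positivity))
      holder).trans (hψ.map_rpow_mul_rpow_le ha hc (by positivity) (by positivity) (by field_simp))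
  have hD : FDPD ν φ γ g f = (1 + γ) / γ * (1 / (1 + γ) * φ a + γ / (1 + γ) * φ c - φ b) := by
    simp only [FDPD, a, b, c]
    field_simp
    ring
  rw [hD]
  exact mul_nonneg (by positivity) (sub_nonneg.2 jensen)
end

section
/- Let X = ℝ with Lebesgue measure ν, let γ > 0, and let φ : [0,∞) → ℝ be continuous. Suppose that D_{φ,γ}(g,f) ≥ 0 for all g, f ∈ F_γ, and that D_{φ,γ}(g,f) > 0 whenever the supports {g > 0} and {f > 0} of g, f ∈ F_γ differ up to a ν-null set. Then ψ(z) = φ(e^z) is strictly increasing and convex on ℝ. -/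
/-!
Scaled indicators `g = a 𝟙_(0,1]`, `f = b 𝟙_(0,m]` with `m ≥ 1` realise every triple
`⟨g^{1+γ}⟩ = e^s`, `⟨g f^γ⟩ = e^c`, `⟨f^{1+γ}⟩ = e^t` allowed by Hölder's inequality,
`(1 + γ) c ≤ s + γ t`, and their supports differ in positive measure exactly when this is strict.
With `s = t = v > u = c`, positivity of the divergence gives `ψ u < ψ v`. In the equality case,
nonnegativity is Jensen's inequality for `ψ` with the single weight `1 / (1 + γ)`; for continuous
`ψ` this already gives convexity, since the set of weights for which Jensen's inequality holds is
closed, contains `0` and `1`, and is stable under the `1 / (1 + γ)`-weighted mean.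
-/

open MeasureTheory

open Set Real
open scoped ENNReal NNReal symmDiff

lemma Icc_subset_of_isClosed_of_weightedMean_mem {S : Set ℝ} (hS : IsClosed S)
    (h0 : 0 ∈ S) (h1 : 1 ∈ S) {l : ℝ} (hl0 : 0 < l) (hl1 : l < 1)
    (hmean : ∀ x ∈ S, ∀ y ∈ S, l * x + (1 - l) * y ∈ S) :
    Icc 0 1 ⊆ S := by
  intro μ hμ
  by_contra hμS
  -- the gap `(a, b)` of `S` around `μ` would contain the `l`-mean of its endpoints
  obtain ⟨a, ⟨haS, ha0, haμ⟩, ha_max⟩ := (isCompact_Icc.inter_left hS).exists_isGreatest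
    (⟨0, h0, le_rfl, hμ.1⟩ : (S ∩ Icc 0 μ).Nonempty)
  obtain ⟨b, ⟨hbS, hμb, hb1⟩, hb_min⟩ := (isCompact_Icc.inter_left hS).exists_isLeast
    (⟨1, h1, hμ.2, le_rfl⟩ : (S ∩ Icc μ 1).Nonempty)
  have hab : a < b :=
    (lt_of_le_of_ne haμ (by rintro rfl; exact hμS haS)).trans
      (lt_of_le_of_ne hμb (by rintro rfl; exact hμS hbS))
  have hc := hmean a haS b hbS
  rcases le_total (l * a + (1 - l) * b) μ with hcμ | hμc
  · have := ha_max ⟨hc, by nlinarith, hcμ⟩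
    nlinarith
  · have := hb_min ⟨hc, hμc, by nlinarith⟩
    nlinarith

lemma convexOn_univ_of_continuous_of_fixed_weight {E : Type*} [AddCommGroup E] [Module ℝ E]
    [TopologicalSpace E] [ContinuousAdd E] [ContinuousSMul ℝ E] {ψ : E → ℝ}
    (hψ : Continuous ψ) {l : ℝ} (hl0 : 0 < l) (hl1 : l < 1)
    (h : ∀ x y, ψ (l • x + (1 - l) • y) ≤ l * ψ x + (1 - l) * ψ y) :
    ConvexOn ℝ univ ψ := by
  set S : Set ℝ := {μ | ∀ x y, ψ (μ • x + (1 - μ) • y) ≤ μ * ψ x + (1 - μ) * ψ y}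
  have hS : IsClosed S := by
    simp only [S, ofPred_forall]
    exact isClosed_iInter fun x => isClosed_iInter fun y =>
      isClosed_le (by fun_prop) (by fun_prop)
  have hmean : ∀ μ ∈ S, ∀ ν ∈ S, l * μ + (1 - l) * ν ∈ S := by
    intro μ hμ ν hν x y
    have hl : 0 ≤ 1 - l := by linarith
    calc ψ ((l * μ + (1 - l) * ν) • x + (1 - (l * μ + (1 - l) * ν)) • y)
        = ψ (l • (μ • x + (1 - μ) • y) + (1 - l) • (ν • x + (1 - ν) • y)) := by
          congr 1; module
      _ ≤ l * ψ (μ • x + (1 - μ) • y) + (1 - l) * ψ (ν • x + (1 - ν) • y) := h _ _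
      _ ≤ l * (μ * ψ x + (1 - μ) * ψ y) + (1 - l) * (ν * ψ x + (1 - ν) * ψ y) := by
          gcongr
          exacts [hμ x y, hν x y]
      _ = _ := by ring
  have hS01 := Icc_subset_of_isClosed_of_weightedMean_mem hS (fun x y => by simp)
    (fun x y => by simp) hl0 hl1 hmean
  refine ⟨convex_univ, fun x _ y _ p q hp hq hpq => ?_⟩
  obtain rfl : q = 1 - p := by linarith
  exact hS01 ⟨hp, by linarith⟩ x y

section IndicatorConst

variable {X : Type*} [MeasurableSpace X] {ν : Measure X} {A B : Set X} {a b : ℝ≥0}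

lemma lintegral_indicator_const_rpow (hA : MeasurableSet A) {p : ℝ} (hp : 0 < p) :
    ∫⁻ x, ((A.indicator (fun _ => a) x : ℝ≥0) : ℝ≥0∞) ^ p ∂ν = (a : ℝ≥0∞) ^ p * ν A := by
  have hpt : ∀ x, ((A.indicator (fun _ => a) x : ℝ≥0) : ℝ≥0∞) ^ p
      = A.indicator (fun _ => (a : ℝ≥0∞) ^ p) x := by
    intro x
    by_cases hx : x ∈ A <;> simp [hx, hp]
  simp_rw [hpt]
  exact lintegral_indicator_const hA _

lemma lintegral_indicator_const_mul_rpow (hA : MeasurableSet A) (hAB : A ⊆ B) (γ : ℝ) :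
    ∫⁻ x, ((A.indicator (fun _ => a) x : ℝ≥0) : ℝ≥0∞)
        * ((B.indicator (fun _ => b) x : ℝ≥0) : ℝ≥0∞) ^ γ ∂ν = a * (b : ℝ≥0∞) ^ γ * ν A := by
  have hpt : ∀ x, ((A.indicator (fun _ => a) x : ℝ≥0) : ℝ≥0∞)
      * ((B.indicator (fun _ => b) x : ℝ≥0) : ℝ≥0∞) ^ γ
        = A.indicator (fun _ => a * (b : ℝ≥0∞) ^ γ) x := by
    intro x
    by_cases hx : x ∈ A
    · simp [hx, hAB hx]
    · simp [hx]
  simp_rw [hpt]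
  exact lintegral_indicator_const hA _

lemma memF_indicator_const (ha : a ≠ 0) (hA : MeasurableSet A) (hA0 : ν A ≠ 0)
    (hA_top : ν A ≠ ∞) {γ : ℝ} (hγ : 0 < 1 + γ) :
    MemF ν γ (A.indicator fun _ => a) := by
  refine ⟨measurable_const.indicator hA, fun h => hA0 ?_, ?_⟩
  · rwa [← Measure.measure_support_eq_zero_iff ν, support_indicator, Function.support_const ha,
      inter_univ] at h
  · rw [lintegral_indicator_const_rpow hA hγ]
    exact ENNReal.mul_ne_top (ENNReal.rpow_ne_top_of_nonneg hγ.le ENNReal.coe_ne_top) hA_top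

lemma fdpd_indicator_const (φ : ℝ → ℝ) {γ : ℝ} (hγ : 0 < 1 + γ) (hA : MeasurableSet A)
    (hB : MeasurableSet B) (hAB : A ⊆ B) :
    FDPD ν φ γ (A.indicator fun _ => a) (B.indicator fun _ => b)
      = 1 / γ * φ ((a : ℝ) ^ (1 + γ) * ν.real A)
        - (1 + γ) / γ * φ (a * (b : ℝ) ^ γ * ν.real A)
        + φ ((b : ℝ) ^ (1 + γ) * ν.real B) := by
  rw [FDPD, lintegral_indicator_const_rpow hA hγ, lintegral_indicator_const_rpow hB hγ,
    lintegral_indicator_const_mul_rpow hA hAB]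
  simp [ENNReal.toReal_mul, ← ENNReal.toReal_rpow, Measure.real]

lemma measure_symmDiff_ne_zero_of_subset_of_lt (hAB : A ⊆ B) (h : ν A < ν B) :
    ν (A ∆ B) ≠ 0 := by
  rw [symmDiff_of_le hAB]
  exact (tsub_pos_of_lt h).trans_le le_measure_sdiff |>.ne'

end IndicatorConst

lemma exists_fdpd_eq_of_le (φ : ℝ → ℝ) {γ : ℝ} (hγ : 0 < γ) {s c t : ℝ}
    (h : (1 + γ) * c ≤ s + γ * t) :
    ∃ g f : ℝ → ℝ≥0, MemF volume γ g ∧ MemF volume γ f ∧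
      FDPD volume φ γ g f = 1 / γ * φ (exp s) - (1 + γ) / γ * φ (exp c) + φ (exp t) ∧
      ((1 + γ) * c < s + γ * t → volume (Function.support g ∆ Function.support f) ≠ 0) := by
  have hγ1 : 0 < 1 + γ := by linarith
  set a := (exp (s / (1 + γ))).toNNReal
  set b := (exp ((c - s / (1 + γ)) / γ)).toNNReal
  set m := exp ((s + γ * t - (1 + γ) * c) / γ)
  have ha : a ≠ 0 := (toNNReal_pos.2 (exp_pos _)).ne'
  have hb : b ≠ 0 := (toNNReal_pos.2 (exp_pos _)).ne'
  have hm : 1 ≤ m := one_le_exp (div_nonneg (by linarith) hγ.le)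
  have hAB : Ioc (0 : ℝ) 1 ⊆ Ioc 0 m := Ioc_subset_Ioc_right hm
  refine ⟨(Ioc 0 1).indicator fun _ => a, (Ioc 0 m).indicator fun _ => b,
    memF_indicator_const ha measurableSet_Ioc (by simp) (by simp) hγ1,
    memF_indicator_const hb measurableSet_Ioc (by simp; linarith) (by simp) hγ1,
    ?_, fun hlt => ?_⟩
  · rw [fdpd_indicator_const φ hγ1 measurableSet_Ioc measurableSet_Ioc hAB]
    simp only [a, b, m, Real.coe_toNNReal _ (exp_pos _).le, ← exp_mul, ← exp_add,
      Measure.real, Real.volume_Ioc, sub_zero, ENNReal.toReal_ofReal zero_le_one,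
      ENNReal.toReal_ofReal (exp_pos _).le, mul_one]
    have hs : s / (1 + γ) * (1 + γ) = s := by field_simp
    have hc : s / (1 + γ) + (c - s / (1 + γ)) / γ * γ = c := by field_simp; ring
    have ht : (c - s / (1 + γ)) / γ * (1 + γ) + (s + γ * t - (1 + γ) * c) / γ = t := by
      field_simp; ring
    rw [hs, hc, ht]
  · rw [support_indicator, support_indicator, Function.support_const ha,
      Function.support_const hb, inter_univ, inter_univ]
    refine measure_symmDiff_ne_zero_of_subset_of_lt hAB ?_
    simp only [Real.volume_Ioc, sub_zero]
    exact ENNReal.ofReal_lt_ofReal_iff'.2 ⟨one_lt_exp_iff.2 (div_pos (by linarith) hγ), exp_pos _⟩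

section FDPDConverse

variable {γ : ℝ} {φ : ℝ → ℝ}

lemma strictMono_comp_exp_of_fdpd_pos (hγ : 0 < γ)
    (hpos : ∀ g f : ℝ → ℝ≥0, MemF volume γ g → MemF volume γ f →
      volume (Function.support g ∆ Function.support f) ≠ 0 → 0 < FDPD volume φ γ g f) :
    StrictMono fun z => φ (exp z) := by
  intro u v huv
  have hlt : (1 + γ) * u < v + γ * v := by nlinarith
  obtain ⟨g, f, hg, hf, hD, hsupp⟩ := exists_fdpd_eq_of_le φ hγ hlt.le
  have hD_pos := hpos g f hg hf (hsupp hlt)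
  have hD_eq : FDPD volume φ γ g f = (1 + γ) / γ * (φ (exp v) - φ (exp u)) := by
    rw [hD]; field_simp; ring
  rw [hD_eq] at hD_pos
  exact sub_pos.1 (pos_of_mul_pos_right hD_pos (by positivity))

lemma convexOn_comp_exp_of_fdpd_nonneg (hγ : 0 < γ) (hφc : ContinuousOn φ (Ici 0))
    (hnonneg : ∀ g f : ℝ → ℝ≥0, MemF volume γ g → MemF volume γ f →
      0 ≤ FDPD volume φ γ g f) :
    ConvexOn ℝ univ fun z => φ (exp z) := by
  set l := (1 + γ)⁻¹
  refine convexOn_univ_of_continuous_of_fixed_weight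
    (hφc.comp_continuous continuous_exp fun z => (exp_pos z).le) (l := l) (by positivity)
    (inv_lt_one_of_one_lt₀ (by linarith)) fun s t => ?_
  have hl : (1 + γ) * l = 1 := mul_inv_cancel₀ (by positivity)
  have hc : (1 + γ) * (l * s + (1 - l) * t) = s + γ * t := by linear_combination (s - t) * hl
  obtain ⟨g, f, hg, hf, hD, -⟩ := exists_fdpd_eq_of_le φ hγ hc.le
  have hD_eq : FDPD volume φ γ g f = (1 + γ) / γ *
      (l * φ (exp s) + (1 - l) * φ (exp t) - φ (exp (l * s + (1 - l) * t))) := by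
    rw [hD]
    field_simp
    linear_combination (φ (exp t) - φ (exp s)) * hl
  have hD_nonneg := hnonneg g f hg hf
  rw [hD_eq] at hD_nonneg
  simpa only [smul_eq_mul, sub_nonneg] using nonneg_of_mul_nonneg_right hD_nonneg (by positivity)

end FDPDConverse

open scoped symmDiff in
theorem fdpd_converse (γ : ℝ) (hγ : 0 < γ) (φ : ℝ → ℝ)
    (hφc : ContinuousOn φ (Set.Ici (0 : ℝ)))
    (hnonneg : ∀ g f : ℝ → NNReal, MemF volume γ g → MemF volume γ f →
      0 ≤ FDPD volume φ γ g f)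
    (hpos : ∀ g f : ℝ → NNReal, MemF volume γ g → MemF volume γ f →
      volume (Function.support g ∆ Function.support f) ≠ 0 →
      0 < FDPD volume φ γ g f) :
    StrictMono (fun z : ℝ => φ (Real.exp z)) ∧
      ConvexOn ℝ Set.univ (fun z : ℝ => φ (Real.exp z)) :=
  ⟨strictMono_comp_exp_of_fdpd_pos hγ hpos, convexOn_comp_exp_of_fdpd_nonneg hγ hφc hnonneg⟩
end

section
/- Let γ > 0 and let φ : (0,∞) → ℝ be continuous such that ψ(z) = φ(e^z) is strictly increasing and convex on ℝ. Suppose there exists a function h̄ : (0,∞) → ℝ such that for all A, X, Y, Z > 0: h̄(A)·[(1/γ)φ(AX) − ((1+γ)/γ)φ(AY) + φ(AZ)] = (1/γ)φ(X) − ((1+γ)/γ)φ(Y) + φ(Z). Then exactly one of the following holds: (i) there exist α > 0 and β ∈ ℝ with φ(z) = α·log z + β for all z > 0, and h̄(A) = 1 for all A > 0; or (ii) there exist α > 0, ζ > 0 and β ∈ ℝ with φ(z) = α·(z^ζ − 1)/ζ + β for all z > 0, and h̄(A) = A^{−ζ} for all A > 0. -/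
/-!
Taking `Z = Y` removes `γ`: `h̄(A) (φ(AX) - φ(AY)) = φ(X) - φ(Y)`. In logarithmic coordinates
`G(x) = φ(eˣ) - φ(1)` and `k(a) = h̄(eᵃ)⁻¹` this is the cocycle equation
`G(a + x) = G(a) + k(a) G(x)`, whose two instances with `a, x` swapped give
`G(a) (1 - k(x)) = G(x) (1 - k(a))`. So either `k ≡ 1` and `G` is additive, or `G = c (1 - k)`
with `k` multiplicative. Since a convex function on `ℝ` is continuous, `G` is then linear,
resp. `k = exp (ζ ·)`; monotonicity and convexity of `φ ∘ exp` fix the signs `α > 0`, `ζ > 0`.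
The cases exclude each other because `h̄(2) = 1 ≠ 2^{-ζ}`.
-/

open Real Set Function

theorem eq_mul_of_add_of_continuous {f : ℝ → ℝ} (hadd : ∀ a b, f (a + b) = f a + f b)
    (hf : Continuous f) (x : ℝ) : f x = f 1 * x := by
  simpa [mul_comm] using map_real_smul (AddMonoidHom.mk' f hadd) hf x 1

theorem eq_exp_of_add_eq_mul_of_continuous {k : ℝ → ℝ} (hmul : ∀ a b, k (a + b) = k a * k b)
    (hk0 : k 0 = 1) (hk : Continuous k) (x : ℝ) : k x = exp (log (k 1) * x) := by
  have hne : ∀ x, k x ≠ 0 := fun x h => by simpa [h, hk0] using hmul x (-x)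
  have hpos : 0 < k x := by
    rw [← add_halves x, hmul]
    exact mul_self_pos.2 (hne _)
  have hlog := eq_mul_of_add_of_continuous (f := fun x => log (k x))
    (fun a b => by simp only [hmul, log_mul (hne a) (hne b)]) (hk.log hne) x
  rw [← hlog, exp_log hpos]

section Cocycle

variable {G k : ℝ → ℝ}

theorem cocycle_of_mul_sub_eq {H : ℝ → ℝ} (hH : ∀ a x, H a * (G (a + x) - G a) = G x)
    (hG1 : G 1 ≠ 0) (a x : ℝ) : G (a + x) = G a + (H a)⁻¹ * G x := by
  have hHa : H a ≠ 0 := fun h => hG1 (by simpa [h] using (hH a 1).symm)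
  field_simp
  linear_combination hH a x

theorem cocycle_symm (hG : ∀ a x, G (a + x) = G a + k a * G x) (a x : ℝ) :
    G a * (1 - k x) = G x * (1 - k a) := by
  have h := hG x a
  rw [add_comm, hG a x] at h
  linear_combination h

theorem cocycle_apply_zero (hG : ∀ a x, G (a + x) = G a + k a * G x) (hG0 : G 0 = 0)
    (hG1 : G 1 ≠ 0) : k 0 = 1 := by
  have h := hG 0 1
  rw [zero_add, hG0, zero_add] at h
  exact (mul_eq_right₀ hG1).1 h.symm

theorem cocycle_linear_or_exp (hG : ∀ a x, G (a + x) = G a + k a * G x) (hGc : Continuous G)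
    (hG0 : G 0 = 0) (hinj : Injective G) :
    (∀ x, k x = 1 ∧ G x = G 1 * x) ∨
      ∃ c ζ : ℝ, ∀ x, k x = exp (ζ * x) ∧ G x = c * (1 - exp (ζ * x)) := by
  have hk0 : k 0 = 1 := cocycle_apply_zero hG hG0 (hG0 ▸ hinj.ne one_ne_zero)
  by_cases hk : ∀ x, k x = 1
  · have hadd : ∀ a x, G (a + x) = G a + G x := fun a x => by rw [hG, hk, one_mul]
    exact .inl fun x => ⟨hk x, eq_mul_of_add_of_continuous hadd hGc x⟩
  obtain ⟨x₀, hx₀⟩ := not_forall.1 hk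
  have hGx₀ : G x₀ ≠ 0 := fun h => hx₀ (by rw [hinj (h.trans hG0.symm), hk0])
  have hsub : 1 - k x₀ ≠ 0 := sub_ne_zero.2 (Ne.symm hx₀)
  set c := G x₀ / (1 - k x₀)
  have hc : c ≠ 0 := div_ne_zero hGx₀ hsub
  have hGk : ∀ x, G x = c * (1 - k x) := fun x => by
    rw [div_mul_eq_mul_div, eq_div_iff hsub, cocycle_symm hG]
  have hmul : ∀ a x, k (a + x) = k a * k x := fun a x => by
    have h := hG a x
    rw [hGk (a + x), hGk a, hGk x] at h
    exact mul_left_cancel₀ hc (by linear_combination -h)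
  have hkc : Continuous k := by
    have : k = fun x => 1 - G x / c := funext fun x => by rw [hGk x]; field_simp; ring
    rw [this]
    fun_prop
  have hexp := eq_exp_of_add_eq_mul_of_continuous hmul hk0 hkc
  exact .inr ⟨c, log (k 1), fun x => ⟨hexp x, by rw [hGk, hexp]⟩⟩

end Cocycle

theorem nonpos_of_convexOn_mul_one_sub_exp_add {c ζ b : ℝ} (hζ : ζ ≠ 0)
    (hconv : ConvexOn ℝ univ fun x => c * (1 - exp (ζ * x)) + b) : c ≤ 0 := by
  have hmid := hconv.2 (mem_univ 0) (mem_univ 2) (by norm_num : (0 : ℝ) ≤ 1 / 2)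
    (by norm_num : (0 : ℝ) ≤ 1 / 2) (by norm_num)
  have hsq : 0 < (exp ζ - 1) ^ 2 :=
    sq_pos_of_ne_zero (sub_ne_zero.2 (mt (exp_eq_one_iff ζ).1 hζ))
  norm_num [smul_eq_mul, mul_two, exp_add] at hmid
  nlinarith

theorem neg_and_pos_of_strictMono_of_convexOn {c ζ b : ℝ}
    (hmono : StrictMono fun x => c * (1 - exp (ζ * x)) + b)
    (hconv : ConvexOn ℝ univ fun x => c * (1 - exp (ζ * x)) + b) : c < 0 ∧ 0 < ζ := by
  have h01 : 0 < c * (1 - exp ζ) := by simpa using hmono zero_lt_one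
  have hζ : ζ ≠ 0 := by rintro rfl; simp at h01
  have hc : c < 0 :=
    (nonpos_of_convexOn_mul_one_sub_exp_add hζ hconv).lt_of_ne (by rintro rfl; simp at h01)
  exact ⟨hc, one_lt_exp_iff.1 (sub_neg.1 (neg_of_mul_pos_right h01 hc.le))⟩

theorem forall_pos_of_forall_exp {P : ℝ → Prop} (h : ∀ x, P (exp x)) (z : ℝ) (hz : 0 < z) :
    P z :=
  exp_log hz ▸ h (log z)

theorem fdpd_affine_invariant_functional_equation_general (γ : ℝ) (hγ : 0 < γ)
    (φ hbar : ℝ → ℝ)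
    (hψm : StrictMono (fun z : ℝ => φ (Real.exp z)))
    (hψc : ConvexOn ℝ Set.univ (fun z : ℝ => φ (Real.exp z)))
    (heq : ∀ A X Y Z : ℝ, 0 < A → 0 < X → 0 < Y → 0 < Z →
      hbar A * ((1 / γ) * φ (A * X) - ((1 + γ) / γ) * φ (A * Y) + φ (A * Z))
        = (1 / γ) * φ X - ((1 + γ) / γ) * φ Y + φ Z) :
    Xor'
      (∃ α : ℝ, 0 < α ∧ ∃ β : ℝ,
        (∀ z : ℝ, 0 < z → φ z = α * Real.log z + β) ∧ ∀ A : ℝ, 0 < A → hbar A = 1)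
      (∃ α : ℝ, 0 < α ∧ ∃ ζ : ℝ, 0 < ζ ∧ ∃ β : ℝ,
        (∀ z : ℝ, 0 < z → φ z = α * (z ^ ζ - 1) / ζ + β) ∧
          ∀ A : ℝ, 0 < A → hbar A = A ^ (-ζ)) := by
  set G : ℝ → ℝ := fun x => φ (exp x) - φ 1
  have hψ (x : ℝ) : φ (exp x) = G x + φ 1 := (sub_add_cancel _ _).symm
  have hG0 : G 0 = 0 := by simp [G]
  have hGmono : StrictMono G := fun a b hab => sub_lt_sub_right (hψm hab) _
  have hG1 : 0 < G 1 := hG0 ▸ hGmono one_pos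
  have hscale (a x : ℝ) : hbar (exp a) * (G (a + x) - G a) = G x := by
    have h := heq (exp a) (exp x) 1 1 (exp_pos a) (exp_pos x) one_pos one_pos
    rw [mul_one, ← exp_add] at h
    field_simp at h
    linear_combination h
  have hGc : Continuous G :=
    (continuousOn_univ.1 (hψc.continuousOn isOpen_univ)).sub continuous_const
  refine (xor_iff_or_and_not_and _ _).2 ⟨?_, ?_⟩
  · rcases cocycle_linear_or_exp (cocycle_of_mul_sub_eq hscale hG1.ne')
      hGc hG0 hGmono.injective with hlin | ⟨c, ζ, hexp⟩
    · refine .inl ⟨G 1, hG1, φ 1, forall_pos_of_forall_exp fun x => ?_,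
        forall_pos_of_forall_exp fun x => inv_eq_one.1 (hlin x).1⟩
      rw [hψ, (hlin x).2, log_exp]
    have hψexp : (fun x => φ (exp x)) = fun x => c * (1 - exp (ζ * x)) + φ 1 :=
      funext fun x => by rw [hψ, (hexp x).2]
    obtain ⟨hc, hζ⟩ :=
      neg_and_pos_of_strictMono_of_convexOn (hψexp ▸ hψm) (hψexp ▸ hψc)
    refine .inr ⟨-c * ζ, mul_pos (neg_pos.2 hc) hζ, ζ, hζ, φ 1,
      forall_pos_of_forall_exp fun x => ?_, forall_pos_of_forall_exp fun x => ?_⟩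
    · rw [hψ, (hexp x).2, ← exp_mul]
      field_simp
      ring
    · rw [← exp_mul, ← inv_inv (hbar _), (hexp x).1, ← exp_neg]
      ring_nf
  · rintro ⟨⟨-, -, -, -, h1⟩, ⟨-, -, ζ, hζ, -, -, h2⟩⟩
    exact (rpow_lt_one_of_one_lt_of_neg one_lt_two (neg_lt_zero.2 hζ)).ne
      ((h2 2 two_pos).symm.trans (h1 2 two_pos))

theorem fdpd_affine_invariant_functional_equation (γ : ℝ) (hγ : 0 < γ)
    (φ hbar : ℝ → ℝ) (hφc : ContinuousOn φ (Set.Ioi (0 : ℝ)))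
    (hψm : StrictMono (fun z : ℝ => φ (Real.exp z)))
    (hψc : ConvexOn ℝ Set.univ (fun z : ℝ => φ (Real.exp z)))
    (heq : ∀ A X Y Z : ℝ, 0 < A → 0 < X → 0 < Y → 0 < Z →
      hbar A * ((1 / γ) * φ (A * X) - ((1 + γ) / γ) * φ (A * Y) + φ (A * Z))
        = (1 / γ) * φ X - ((1 + γ) / γ) * φ Y + φ Z) :
    Xor'
      (∃ α : ℝ, 0 < α ∧ ∃ β : ℝ,
        (∀ z : ℝ, 0 < z → φ z = α * Real.log z + β) ∧ ∀ A : ℝ, 0 < A → hbar A = 1)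
      (∃ α : ℝ, 0 < α ∧ ∃ ζ : ℝ, 0 < ζ ∧ ∃ β : ℝ,
        (∀ z : ℝ, 0 < z → φ z = α * (z ^ ζ - 1) / ζ + β) ∧
          ∀ A : ℝ, 0 < A → hbar A = A ^ (-ζ)) :=
  fdpd_affine_invariant_functional_equation_general γ hγ φ hbar hψm hψc heq
end

section
/- Let φ : (0,∞) → ℝ be differentiable with continuous and nowhere-vanishing derivative φ'. Suppose there exists a function h̄ : (0,∞) → ℝ such that for all A, X, Y > 0 and all Z ∈ ℝ: h̄(A)·[A·φ'(AX)·Z − φ(AX) + φ(AY)] = φ'(X)·Z − φ(X) + φ(Y). Then there exists c ∈ ℝ such that φ'(Y) = φ'(1)·Y^c for all Y > 0; consequently, φ(Y) = φ'(1)·(Y^{1+c} − 1)/(1+c) + φ(1) for all Y > 0 if c ≠ −1, and φ(Y) = φ'(1)·log Y + φ(1) for all Y > 0 if c = −1. -/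
/-!
Taking `Y = 1` and comparing the coefficients of `Z` in the functional equation gives
`h̄(A) A φ'(AX) = φ'(X)`; eliminating `h̄(A)` with `X = 1` shows that `φ' / φ'(1)` is
multiplicative on `(0, ∞)`. Being continuous and nowhere zero, it is positive, so
`t ↦ log (φ'(eᵗ) / φ'(1))` is a continuous solution of Cauchy's equation, hence linear, and
`φ'(Y) = φ'(1) Y^c`. The formulas for `φ` follow by integrating from `1`.
-/

open Real Set

lemma eqOn_Ioi_of_hasDerivAt {f g f' : ℝ → ℝ}
    (hf : ∀ x, 0 < x → HasDerivAt f (f' x) x) (hg : ∀ x, 0 < x → HasDerivAt g (f' x) x)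
    (h1 : f 1 = g 1) : EqOn f g (Ioi 0) :=
  isOpen_Ioi.eqOn_of_deriv_eq isPreconnected_Ioi
    (fun x hx => (hf x hx).differentiableAt.differentiableWithinAt)
    (fun x hx => (hg x hx).differentiableAt.differentiableWithinAt)
    (fun x hx => (hf x hx).deriv.trans (hg x hx).deriv.symm) (mem_Ioi.2 one_pos) h1

lemma eq_mul_of_continuous_of_map_add {g : ℝ → ℝ} (hg : Continuous g)
    (hadd : ∀ s t, g (s + t) = g s + g t) (t : ℝ) : g t = t * g 1 := by
  simpa using map_real_smul (AddMonoidHom.mk' g hadd) hg t 1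

section MultiplicativeOnIoi

variable {ψ : ℝ → ℝ} (hmul : ∀ x y, 0 < x → 0 < y → ψ (x * y) = ψ x * ψ y)
  (hne : ∀ x, 0 < x → ψ x ≠ 0)
include hmul hne

lemma pos_of_map_mul {x : ℝ} (hx : 0 < x) : 0 < ψ x := by
  have hs : 0 < √x := sqrt_pos.2 hx
  rw [← mul_self_sqrt hx.le, hmul _ _ hs hs]
  exact mul_self_pos.2 (hne _ hs)

lemma exists_eq_rpow_of_map_mul (hcont : ContinuousOn ψ (Ioi 0)) :
    ∃ c : ℝ, ∀ x, 0 < x → ψ x = x ^ c := by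
  have hpos : ∀ x, 0 < x → 0 < ψ x := fun x hx => pos_of_map_mul hmul hne hx
  set g : ℝ → ℝ := fun t => log (ψ (exp t)) with hg_def
  have hg : Continuous g :=
    (hcont.comp_continuous continuous_exp exp_pos).log fun t => (hpos _ (exp_pos t)).ne'
  have hadd : ∀ s t, g (s + t) = g s + g t := fun s t => by
    simp only [hg_def, exp_add, hmul _ _ (exp_pos s) (exp_pos t)]
    exact log_mul (hpos _ (exp_pos s)).ne' (hpos _ (exp_pos t)).ne'
  refine ⟨g 1, fun x hx => ?_⟩
  calc ψ x = exp (g (log x)) := by simp only [hg_def, exp_log hx, exp_log (hpos x hx)]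
    _ = x ^ g 1 := by rw [eq_mul_of_continuous_of_map_add hg hadd, rpow_def_of_pos hx]

end MultiplicativeOnIoi

lemma exists_eq_mul_rpow_of_map_mul {ψ : ℝ → ℝ} (hcont : ContinuousOn ψ (Ioi 0))
    (hne : ∀ x, 0 < x → ψ x ≠ 0)
    (hmul : ∀ x y, 0 < x → 0 < y → ψ 1 * ψ (x * y) = ψ x * ψ y) :
    ∃ c : ℝ, ∀ x, 0 < x → ψ x = ψ 1 * x ^ c := by
  have h1 : ψ 1 ≠ 0 := hne 1 one_pos
  obtain ⟨c, hc⟩ := exists_eq_rpow_of_map_mul (ψ := fun x => ψ x / ψ 1)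
    (fun x y hx hy => by field_simp; linear_combination hmul x y hx hy)
    (fun x hx => div_ne_zero (hne x hx) h1) (hcont.div_const _)
  exact ⟨c, fun x hx => by rw [← hc x hx]; field_simp⟩

lemma hasDerivAt_rpow_add_one_sub_one_div {c x : ℝ} (hc : c ≠ -1) (hx : 0 < x) :
    HasDerivAt (fun y => (y ^ (1 + c) - 1) / (1 + c)) (x ^ c) x := by
  have h1c : 1 + c ≠ 0 := fun h => hc (by linarith)
  refine (((hasDerivAt_rpow_const (Or.inl hx.ne')).sub_const 1).div_const (1 + c)).congr_deriv ?_
  rw [add_sub_cancel_left]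
  field_simp

lemma map_mul_deriv_of_affine_invariant {φ φ' hbar : ℝ → ℝ}
    (heq : ∀ A X Y : ℝ, 0 < A → 0 < X → 0 < Y → ∀ Z : ℝ,
      hbar A * (A * φ' (A * X) * Z - φ (A * X) + φ (A * Y)) = φ' X * Z - φ X + φ Y)
    {A X : ℝ} (hA : 0 < A) (hX : 0 < X) : φ' 1 * φ' (A * X) = φ' A * φ' X := by
  have hcoeff : ∀ X, 0 < X → hbar A * A * φ' (A * X) = φ' X := fun X hX => by
    linear_combination heq A X 1 hA hX one_pos 1 - heq A X 1 hA hX one_pos 0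
  have hcoeff_one := hcoeff 1 one_pos
  rw [mul_one] at hcoeff_one
  linear_combination φ' A * hcoeff X hX - φ' (A * X) * hcoeff_one

theorem fdpd_kl_affine_invariant_functional_equation
    (φ φ' hbar : ℝ → ℝ)
    (hderiv : ∀ z : ℝ, 0 < z → HasDerivAt φ (φ' z) z)
    (hcont : ContinuousOn φ' (Set.Ioi (0 : ℝ)))
    (hne : ∀ z : ℝ, 0 < z → φ' z ≠ 0)
    (heq : ∀ A X Y : ℝ, 0 < A → 0 < X → 0 < Y → ∀ Z : ℝ,
      hbar A * (A * φ' (A * X) * Z - φ (A * X) + φ (A * Y))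
        = φ' X * Z - φ X + φ Y) :
    ∃ c : ℝ,
      (∀ Y : ℝ, 0 < Y → φ' Y = φ' 1 * Y ^ c) ∧
      (c ≠ -1 → ∀ Y : ℝ, 0 < Y → φ Y = φ' 1 * (Y ^ (1 + c) - 1) / (1 + c) + φ 1) ∧
      (c = -1 → ∀ Y : ℝ, 0 < Y → φ Y = φ' 1 * Real.log Y + φ 1) := by
  obtain ⟨c, hpow⟩ := exists_eq_mul_rpow_of_map_mul hcont hne
    fun A X hA hX => map_mul_deriv_of_affine_invariant heq hA hX
  refine ⟨c, hpow, fun hc => eqOn_Ioi_of_hasDerivAt hderiv (fun y hy => ?_) (by simp),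
    fun hc => eqOn_Ioi_of_hasDerivAt hderiv (fun y hy => ?_) (by simp)⟩
  · simp only [mul_div_assoc, hpow y hy]
    exact ((hasDerivAt_rpow_add_one_sub_one_div hc hy).const_mul _).add_const _
  · rw [hpow y hy, hc, rpow_neg_one]
    exact ((hasDerivAt_log hy.ne').const_mul _).add_const _
end

section
/- Let γ > 0 and ζ > 0, and define η : [0,∞) → ℝ by η(z) = −sign((1+γ)z^ζ − γ)·|(1+γ)z^ζ − γ|^{1/ζ}, where sign(0) = 0. Then η(1) = −1 and η(z) ≥ −z^{1+γ} for all z ≥ 0; that is, η is a valid generating function for a Hölder divergence. -/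
/-!
If `w := (1 + γ) z^ζ - γ ≤ 0` then `η(z) ≥ 0 ≥ -z^{1+γ}`. Otherwise Bernoulli's inequality for the
exponent `1 + γ ≥ 1`, applied at `z^ζ`, gives `w ≤ (z^ζ)^{1+γ} = (z^{1+γ})^ζ`, and taking `1/ζ`-th
powers yields `-η(z) = w^{1/ζ} ≤ z^{1+γ}`.
-/

noncomputable def etaJHHB (γ ζ z : ℝ) : ℝ :=
  -(Real.sign ((1 + γ) * z ^ ζ - γ)) * |(1 + γ) * z ^ ζ - γ| ^ (1 / ζ)

namespace Real

theorem mul_sub_sub_one_le_rpow {x p : ℝ} (hx : 0 ≤ x) (hp : 1 ≤ p) :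
    p * x - (p - 1) ≤ x ^ p := by
  have h := one_add_mul_self_le_rpow_one_add (s := x - 1) (by linarith) hp
  rw [add_sub_cancel] at h
  linarith

theorem sign_mul_abs_rpow_one_div_le {w b ζ : ℝ} (hb : 0 ≤ b) (hζ : 0 < ζ) (hw : w ≤ b ^ ζ) :
    sign w * |w| ^ (1 / ζ) ≤ b := by
  rcases le_or_gt w 0 with hw_nonpos | hw_pos
  · have hsign : sign w ≤ 0 := by
      rcases hw_nonpos.lt_or_eq with hneg | rfl
      · simp [sign_of_neg hneg]
      · simp
    exact (mul_nonpos_of_nonpos_of_nonneg hsign (by positivity)).trans hb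
  · rw [sign_of_pos hw_pos, one_mul, abs_of_pos hw_pos]
    calc w ^ (1 / ζ) ≤ (b ^ ζ) ^ (1 / ζ) := rpow_le_rpow hw_pos.le hw (by positivity)
      _ = b := by rw [one_div, rpow_rpow_inv hb hζ.ne']

end Real

theorem etaJHHB_one (γ ζ : ℝ) : etaJHHB γ ζ 1 = -1 := by
  simp [etaJHHB]

theorem etaJHHB_valid (γ ζ : ℝ) (hγ : 0 < γ) (hζ : 0 < ζ) :
    etaJHHB γ ζ 1 = -1 ∧ ∀ z : ℝ, 0 ≤ z → etaJHHB γ ζ z ≥ -z ^ (1 + γ) := by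
  refine ⟨etaJHHB_one γ ζ, fun z hz => ?_⟩
  have hbernoulli : (1 + γ) * z ^ ζ - γ ≤ (z ^ (1 + γ)) ^ ζ := by
    rw [← Real.rpow_mul hz, mul_comm (1 + γ) ζ, Real.rpow_mul hz]
    simpa using Real.mul_sub_sub_one_le_rpow (Real.rpow_nonneg hz ζ) (by linarith : 1 ≤ 1 + γ)
  rw [etaJHHB, ge_iff_le, neg_le, neg_mul, neg_neg]
  exact Real.sign_mul_abs_rpow_one_div_le (Real.rpow_nonneg hz _) hζ hbernoulli
end

section
/- Let γ > 0 and ζ > 0, define η(z) = −sign((1+γ)z^ζ − γ)·|(1+γ)z^ζ − γ|^{1/ζ} (with sign(0) = 0), define the strictly increasing function τ : ℝ → ℝ by τ(z) = (sign(z)|z|^ζ + 1)/ζ, and let φ_ζ(z) = (z^ζ − 1)/ζ. Then for all g, f ∈ F_γ with ⟨f^{1+γ}⟩ > 0, the Hölder score S_{η,γ}(g,f) = η(⟨g f^γ⟩/⟨f^{1+γ}⟩)·⟨f^{1+γ}⟩ satisfies τ(S_{η,γ}(g,f)) = γ·φ_ζ(⟨f^{1+γ}⟩) − (1+γ)·φ_ζ(⟨g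 f^γ⟩); that is, the Hölder score with this η is equivalent (via the strictly increasing function τ) to the JHHB score. -/
open MeasureTheory

/-- The strictly increasing function giving the equivalence of scoring rules. -/
noncomputable def tauJHHB (ζ z : ℝ) : ℝ := (Real.sign z * |z| ^ ζ + 1) / ζ

/-- The generating function `φ_ζ(z) = (z^ζ - 1)/ζ` of the JHHB divergence family. -/
noncomputable def phiJHHB (ζ z : ℝ) : ℝ := (z ^ ζ - 1) / ζ

/-! With `A = ⟨g f^γ⟩` and `B = ⟨f^{1+γ}⟩`, the theorem is an identity between real numbers.
Both `η` and `τ` are built from the signed power `z ↦ sign z · |z|^p`, which is odd, multiplicative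
against positive factors, and satisfies `(z^{1/ζ})^ζ = z` in the signed sense. Hence the signed
`ζ`-th power of `η(A/B) · B` is `-((1 + γ)(A/B)^ζ - γ) · B^ζ = γ B^ζ - (1 + γ) A^ζ`, and adding `1`
and dividing by `ζ` gives `γ φ_ζ(B) - (1 + γ) φ_ζ(A)`. The integrals only have to make `B` a
positive real. -/

noncomputable def signedRpow (p z : ℝ) : ℝ := Real.sign z * |z| ^ p

lemma Real.sign_mul_of_pos (x : ℝ) {b : ℝ} (hb : 0 < b) : Real.sign (x * b) = Real.sign x := by
  rcases lt_trichotomy x 0 with hx | rfl | hx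
  · rw [Real.sign_of_neg hx, Real.sign_of_neg (mul_neg_of_neg_of_pos hx hb)]
  · rw [zero_mul]
  · rw [Real.sign_of_pos hx, Real.sign_of_pos (mul_pos hx hb)]

lemma signedRpow_neg (p z : ℝ) : signedRpow p (-z) = -signedRpow p z := by
  rw [signedRpow, signedRpow, Real.sign_neg, abs_neg, neg_mul]

lemma signedRpow_zero_right (p : ℝ) : signedRpow p 0 = 0 := by
  rw [signedRpow, Real.sign_zero, zero_mul]

lemma signedRpow_of_pos (p : ℝ) {z : ℝ} (hz : 0 < z) : signedRpow p z = z ^ p := by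
  rw [signedRpow, Real.sign_of_pos hz, abs_of_pos hz, one_mul]

lemma signedRpow_of_nonneg {p z : ℝ} (hp : p ≠ 0) (hz : 0 ≤ z) : signedRpow p z = z ^ p := by
  rcases hz.eq_or_lt with rfl | hz
  · rw [signedRpow_zero_right, Real.zero_rpow hp]
  · exact signedRpow_of_pos p hz

lemma signedRpow_one (z : ℝ) : signedRpow 1 z = z := by
  rcases lt_trichotomy z 0 with hz | rfl | hz
  · obtain ⟨w, rfl⟩ : ∃ w, z = -w := ⟨-z, (neg_neg z).symm⟩
    rw [signedRpow_neg, signedRpow_of_pos 1 (neg_lt_zero.1 hz), Real.rpow_one]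
  · exact signedRpow_zero_right 1
  · rw [signedRpow_of_pos 1 hz, Real.rpow_one]

lemma signedRpow_mul_of_pos (p x : ℝ) {b : ℝ} (hb : 0 < b) :
    signedRpow p (x * b) = signedRpow p x * b ^ p := by
  rw [signedRpow, signedRpow, Real.sign_mul_of_pos x hb, abs_mul, abs_of_pos hb,
    Real.mul_rpow (abs_nonneg x) hb.le, mul_assoc]

lemma signedRpow_signedRpow (p q z : ℝ) :
    signedRpow p (signedRpow q z) = signedRpow (q * p) z := by
  have of_pos : ∀ w > 0, signedRpow p (signedRpow q w) = signedRpow (q * p) w := fun w hw => by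
    rw [signedRpow_of_pos q hw, signedRpow_of_pos p (Real.rpow_pos_of_pos hw q),
      signedRpow_of_pos _ hw, Real.rpow_mul hw.le]
  rcases lt_trichotomy z 0 with hz | rfl | hz
  · obtain ⟨w, rfl⟩ : ∃ w, z = -w := ⟨-z, (neg_neg z).symm⟩
    rw [signedRpow_neg, signedRpow_neg, signedRpow_neg, of_pos w (neg_lt_zero.1 hz)]
  · simp only [signedRpow_zero_right]
  · exact of_pos z hz

lemma strictMono_signedRpow {p : ℝ} (hp : 0 < p) : StrictMono (signedRpow p) :=
  strictMono_of_odd_strictMonoOn_nonneg (signedRpow_neg p)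
    ((Real.strictMonoOn_rpow_Ici_of_exponent_pos hp).congr
      fun _ hz => (signedRpow_of_nonneg hp.ne' hz).symm)

section JHHB

variable {γ ζ : ℝ}

lemma tauJHHB_eq (ζ z : ℝ) : tauJHHB ζ z = (signedRpow ζ z + 1) / ζ := rfl

lemma etaJHHB_eq (γ ζ z : ℝ) : etaJHHB γ ζ z = -signedRpow ζ⁻¹ ((1 + γ) * z ^ ζ - γ) := by
  rw [etaJHHB, signedRpow, neg_mul, one_div]

lemma strictMono_tauJHHB (hζ : 0 < ζ) : StrictMono (tauJHHB ζ) :=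
  ((strictMono_signedRpow hζ).add_const 1).div_const hζ

lemma signedRpow_etaJHHB_div_mul (hζ : ζ ≠ 0) {A B : ℝ} (hA : 0 ≤ A) (hB : 0 < B) :
    signedRpow ζ (etaJHHB γ ζ (A / B) * B) = γ * B ^ ζ - (1 + γ) * A ^ ζ := by
  rw [signedRpow_mul_of_pos _ _ hB, etaJHHB_eq, signedRpow_neg, signedRpow_signedRpow,
    inv_mul_cancel₀ hζ, signedRpow_one, Real.div_rpow hA hB.le]
  field_simp
  ring

lemma tauJHHB_etaJHHB_div_mul (hζ : ζ ≠ 0) {A B : ℝ} (hA : 0 ≤ A) (hB : 0 < B) :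
    tauJHHB ζ (etaJHHB γ ζ (A / B) * B) = γ * phiJHHB ζ B - (1 + γ) * phiJHHB ζ A := by
  rw [tauJHHB_eq, signedRpow_etaJHHB_div_mul hζ hA hB, phiJHHB, phiJHHB]
  field_simp
  ring

end JHHB

theorem holder_score_equiv_jhhb_score_general {X : Type*} [MeasurableSpace X] (ν : Measure X)
    (γ ζ : ℝ) (hζ : 0 < ζ) :
    StrictMono (tauJHHB ζ) ∧
    ∀ g f : X → NNReal, MemF ν γ g → MemF ν γ f →
      (∫⁻ x, (f x : ENNReal) ^ (1 + γ) ∂ν) ≠ 0 →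
      tauJHHB ζ
        (etaJHHB γ ζ
            ((∫⁻ x, (g x : ENNReal) * (f x : ENNReal) ^ γ ∂ν).toReal /
              (∫⁻ x, (f x : ENNReal) ^ (1 + γ) ∂ν).toReal) *
          (∫⁻ x, (f x : ENNReal) ^ (1 + γ) ∂ν).toReal)
        = γ * phiJHHB ζ (∫⁻ x, (f x : ENNReal) ^ (1 + γ) ∂ν).toReal
          - (1 + γ) * phiJHHB ζ (∫⁻ x, (g x : ENNReal) * (f x : ENNReal) ^ γ ∂ν).toReal := by
  refine ⟨strictMono_tauJHHB hζ, fun g f _ hf hf0 => ?_⟩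
  have hB : 0 < (∫⁻ x, (f x : ENNReal) ^ (1 + γ) ∂ν).toReal :=
    ENNReal.toReal_pos hf0 hf.2.2
  exact tauJHHB_etaJHHB_div_mul hζ.ne' ENNReal.toReal_nonneg hB

theorem holder_score_equiv_jhhb_score {X : Type*} [MeasurableSpace X] (ν : Measure X)
    (γ ζ : ℝ) (hγ : 0 < γ) (hζ : 0 < ζ) :
    StrictMono (tauJHHB ζ) ∧
    ∀ g f : X → NNReal, MemF ν γ g → MemF ν γ f →
      (∫⁻ x, (f x : ENNReal) ^ (1 + γ) ∂ν) ≠ 0 →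
      tauJHHB ζ
        (etaJHHB γ ζ
            ((∫⁻ x, (g x : ENNReal) * (f x : ENNReal) ^ γ ∂ν).toReal /
              (∫⁻ x, (f x : ENNReal) ^ (1 + γ) ∂ν).toReal) *
          (∫⁻ x, (f x : ENNReal) ^ (1 + γ) ∂ν).toReal)
        = γ * phiJHHB ζ (∫⁻ x, (f x : ENNReal) ^ (1 + γ) ∂ν).toReal
          - (1 + γ) * phiJHHB ζ (∫⁻ x, (g x : ENNReal) * (f x : ENNReal) ^ γ ∂ν).toReal :=
  holder_score_equiv_jhhb_score_general ν γ ζ hζ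
end

section
/- Let u, v : ℝ → ℝ be strictly increasing and continuous, with the range of v contained in the range of u. Let U, V : [0,∞) → ℝ be functions with V non-constant. Suppose that for every simple (finitely-valued) measurable function g : [0,1] → [0,∞) one has u(∫₀¹ g(x)U(g(x)) dx) = v(∫₀¹ V(g(x)) dx), where the integrals are with respect to Lebesgue measure on [0,1]. Then there exist constants a ≠ 0 and b ∈ ℝ such that u(a·y + b) = v(y) for every y in the convex hull of the range of V, and z·U(z) = a·V(z) + b for all z ≥ 0. -/
/-!
Testing the hypothesis on two-valued step functions gives, with `φ z = z * U z`,
`u (t φ x + (1 - t) φ y) = v (t V x + (1 - t) V y)`. As `u` is injective, whenever `V z` is a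
convex combination of `V x` and `V y`, `φ z` is the same combination of `φ x` and `φ y`. Of any
three reals one lies between the other two, so this forces every point `(V z, φ z)` onto the line
through two such points with distinct `V`-values. On the convex hull of the range of `V` the
relation `u (a y + b) = v y` is the two-point identity once more.
-/

open MeasureTheory Set

theorem setIntegral_Icc_zero_one_ite_le {t : ℝ} (ht₀ : 0 ≤ t) (ht₁ : t ≤ 1) (c c' : ℝ) :
    ∫ x in Icc (0 : ℝ) 1, (if x ≤ t then c else c') = t * c + (1 - t) * c' := by
  have hle : Iic t ∩ Icc (0 : ℝ) 1 = Icc 0 t := by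
    ext x; simp only [mem_inter_iff, mem_Iic, mem_Icc]; grind
  have hgt : (Iic t)ᶜ ∩ Icc (0 : ℝ) 1 = Ioc t 1 := by
    ext x; simp only [mem_inter_iff, mem_compl_iff, mem_Iic, mem_Icc, mem_Ioc]; grind
  have hsplit := integral_piecewise (μ := volume.restrict (Icc (0 : ℝ) 1)) (s := Iic t)
    (f := fun _ => c) (g := fun _ => c') measurableSet_Iic
    (integrable_const c).integrableOn (integrable_const c').integrableOn
  simp only [piecewise, mem_Iic] at hsplit
  rw [hsplit, Measure.restrict_restrict measurableSet_Iic,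
    Measure.restrict_restrict measurableSet_Iic.compl, hle, hgt, setIntegral_const,
    setIntegral_const, Real.volume_real_Icc_of_le ht₀, Real.volume_real_Ioc_of_le ht₁,
    sub_zero, smul_eq_mul, smul_eq_mul]

theorem apply_two_point_mixture_eq {u v U V : ℝ → ℝ}
    (heq : ∀ g : ℝ → ℝ, Measurable g → (range g).Finite → (∀ x, 0 ≤ g x) →
      u (∫ x in Icc (0 : ℝ) 1, g x * U (g x)) = v (∫ x in Icc (0 : ℝ) 1, V (g x)))
    {x y a b : ℝ} (hx : 0 ≤ x) (hy : 0 ≤ y) (ha : 0 ≤ a) (hb : 0 ≤ b) (hab : a + b = 1) :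
    u (a * (x * U x) + b * (y * U y)) = v (a * V x + b * V y) := by
  obtain rfl : b = 1 - a := by linarith
  have hg : Measurable fun s : ℝ => if s ≤ a then x else y :=
    Measurable.ite measurableSet_Iic measurable_const measurable_const
  have hfin : (range fun s : ℝ => if s ≤ a then x else y).Finite :=
    (finite_singleton y).insert x |>.subset <| range_ite_subset.trans <| by
      simp only [range_const, insert_eq, subset_refl]
  have hnonneg : ∀ s : ℝ, 0 ≤ if s ≤ a then x else y := fun s => by split_ifs <;> assumption
  have h := heq _ hg hfin hnonneg
  simp only [apply_ite (fun z => z * U z), apply_ite V] at h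
  rwa [setIntegral_Icc_zero_one_ite_le ha (by linarith),
    setIntegral_Icc_zero_one_ite_le ha (by linarith)] at h

theorem mem_segment_or_mem_segment_or_mem_segment (p q r : ℝ) :
    p ∈ segment ℝ q r ∨ q ∈ segment ℝ p r ∨ r ∈ segment ℝ p q := by
  simp only [segment_eq_uIcc, mem_uIcc]
  rcases le_total p q with h | h <;> rcases le_total q r with h' | h' <;>
    rcases le_total p r with h'' | h'' <;> tauto

section AffineDependence

variable {α : Type*} {S : Set α} {f g : α → ℝ}

theorem eq_affine_of_convex_combination_eq
    (h : ∀ x ∈ S, ∀ y ∈ S, ∀ z ∈ S, ∀ a b : ℝ, 0 ≤ a → 0 ≤ b → a + b = 1 →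
      a * g x + b * g y = g z → a * f x + b * f y = f z)
    {x₁ x₂ : α} (hx₁ : x₁ ∈ S) (hx₂ : x₂ ∈ S) (hg : g x₁ ≠ g x₂) {a b : ℝ}
    (h₁ : f x₁ = a * g x₁ + b) (h₂ : f x₂ = a * g x₂ + b) {z : α} (hz : z ∈ S) :
    f z = a * g z + b := by
  have extend : ∀ x ∈ S, ∀ y ∈ S, f x = a * g x + b → f y = a * g y + b → g x ≠ g y →
      g x ∈ segment ℝ (g z) (g y) → f z = a * g z + b := by
    rintro x hx y hy hfx hfy hxy ⟨s, t, hs, ht, hst, hcomb⟩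
    simp only [smul_eq_mul] at hcomb
    have hs₀ : s ≠ 0 := by
      rintro rfl
      obtain rfl : t = 1 := by linarith
      exact hxy (by linarith)
    have hf := h z hz y hy x hx s t hs ht hst hcomb
    apply mul_left_cancel₀ hs₀
    linear_combination hf + hfx - t * hfy - a * hcomb - b * hst
  rcases mem_segment_or_mem_segment_or_mem_segment (g z) (g x₁) (g x₂) with hz' | h₁' | h₂'
  · obtain ⟨s, t, hs, ht, hst, hcomb⟩ := hz'
    simp only [smul_eq_mul] at hcomb
    rw [← h x₁ hx₁ x₂ hx₂ z hz s t hs ht hst hcomb, h₁, h₂, ← hcomb]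
    linear_combination b * hst
  · exact extend x₁ hx₁ x₂ hx₂ h₁ h₂ hg h₁'
  · exact extend x₂ hx₂ x₁ hx₁ h₂ h₁ hg.symm h₂'

theorem exists_affine_of_convex_combination_eq
    (h : ∀ x ∈ S, ∀ y ∈ S, ∀ z ∈ S, ∀ a b : ℝ, 0 ≤ a → 0 ≤ b → a + b = 1 →
      a * g x + b * g y = g z → a * f x + b * f y = f z)
    {x₁ x₂ : α} (hx₁ : x₁ ∈ S) (hx₂ : x₂ ∈ S) (hg : g x₁ ≠ g x₂) :
    ∃ a b : ℝ, ∀ z ∈ S, f z = a * g z + b := by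
  have hg' : g x₁ - g x₂ ≠ 0 := sub_ne_zero.2 hg
  obtain ⟨a, ha⟩ : ∃ a, a * (g x₁ - g x₂) = f x₁ - f x₂ := ⟨_, div_mul_cancel₀ _ hg'⟩
  refine ⟨a, f x₂ - a * g x₂, fun z hz => eq_affine_of_convex_combination_eq h hx₁ hx₂ hg
    (by linear_combination -ha) (by ring) hz⟩

end AffineDependence

theorem exists_mem_segment_of_mem_convexHull {s : Set ℝ} {y : ℝ} (hy : y ∈ convexHull ℝ s) :
    ∃ p ∈ s, ∃ q ∈ s, y ∈ segment ℝ p q := by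
  have hT : OrdConnected {w | (∃ p ∈ s, p ≤ w) ∧ ∃ q ∈ s, w ≤ q} := by
    constructor
    rintro _ ⟨⟨p, hp, hpx⟩, -⟩ _ ⟨-, q, hq, hyq⟩ w hw
    exact ⟨⟨p, hp, hpx.trans hw.1⟩, q, hq, hw.2.trans hyq⟩
  obtain ⟨⟨p, hp, hpy⟩, q, hq, hyq⟩ :=
    convexHull_min (fun p hp => by exact ⟨⟨p, hp, le_rfl⟩, p, hp, le_rfl⟩) hT.convex hy
  exact ⟨p, hp, q, hq, segment_eq_Icc (hpy.trans hyq) ▸ ⟨hpy, hyq⟩⟩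

theorem inner_outer_relation_of_composite_scoring_rule_general
    (u v U V : ℝ → ℝ) (hu : StrictMono u) (hv : StrictMono v)
    (hVnc : ∃ z₁ : ℝ, 0 ≤ z₁ ∧ ∃ z₂ : ℝ, 0 ≤ z₂ ∧ V z₁ ≠ V z₂)
    (heq : ∀ g : ℝ → ℝ, Measurable g → (Set.range g).Finite → (∀ x, 0 ≤ g x) →
      u (∫ x in Set.Icc (0 : ℝ) 1, g x * U (g x) ∂volume)
        = v (∫ x in Set.Icc (0 : ℝ) 1, V (g x) ∂volume)) :
    ∃ a : ℝ, a ≠ 0 ∧ ∃ b : ℝ,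
      (∀ y ∈ convexHull ℝ (V '' Set.Ici (0 : ℝ)), u (a * y + b) = v y) ∧
      ∀ z : ℝ, 0 ≤ z → z * U z = a * V z + b := by
  obtain ⟨z₁, hz₁, z₂, hz₂, hV⟩ := hVnc
  have point : ∀ z, 0 ≤ z → u (z * U z) = v (V z) := fun z hz => by
    simpa using apply_two_point_mixture_eq heq hz hz zero_le_one le_rfl (add_zero 1)
  have determined : ∀ x ∈ Ici (0 : ℝ), ∀ y ∈ Ici 0, ∀ z ∈ Ici 0, ∀ s t : ℝ, 0 ≤ s → 0 ≤ t →
      s + t = 1 → s * V x + t * V y = V z → s * (x * U x) + t * (y * U y) = z * U z := by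
    intro x hx y hy z hz s t hs ht hst hcomb
    apply hu.injective
    rw [apply_two_point_mixture_eq heq hx hy hs ht hst, hcomb, point z hz]
  obtain ⟨a, b, haff⟩ := exists_affine_of_convex_combination_eq determined hz₁ hz₂ hV
  have ha : a ≠ 0 := by
    rintro rfl
    apply hV (hv.injective _)
    rw [← point z₁ hz₁, ← point z₂ hz₂, haff z₁ hz₁, haff z₂ hz₂, zero_mul, zero_mul]
  refine ⟨a, ha, b, ?_, haff⟩
  intro y hy
  obtain ⟨_, ⟨x, hx, rfl⟩, _, ⟨x', hx', rfl⟩, s, t, hs, ht, hst, rfl⟩ :=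
    exists_mem_segment_of_mem_convexHull hy
  rw [smul_eq_mul, smul_eq_mul, ← apply_two_point_mixture_eq heq hx hx' hs ht hst,
    haff x hx, haff x' hx']
  congr 1
  linear_combination -b * hst

theorem inner_outer_relation_of_composite_scoring_rule
    (u v U V : ℝ → ℝ) (hu : StrictMono u) (hv : StrictMono v)
    (huc : Continuous u) (hvc : Continuous v)
    (hrange : Set.range v ⊆ Set.range u)
    (hVnc : ∃ z₁ : ℝ, 0 ≤ z₁ ∧ ∃ z₂ : ℝ, 0 ≤ z₂ ∧ V z₁ ≠ V z₂)
    (heq : ∀ g : ℝ → ℝ, Measurable g → (Set.range g).Finite → (∀ x, 0 ≤ g x) →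
      u (∫ x in Set.Icc (0 : ℝ) 1, g x * U (g x) ∂volume)
        = v (∫ x in Set.Icc (0 : ℝ) 1, V (g x) ∂volume)) :
    ∃ a : ℝ, a ≠ 0 ∧ ∃ b : ℝ,
      (∀ y ∈ convexHull ℝ (V '' Set.Ici (0 : ℝ)), u (a * y + b) = v y) ∧
      ∀ z : ℝ, 0 ≤ z → z * U z = a * V z + b :=
  inner_outer_relation_of_composite_scoring_rule_general u v U V hu hv hVnc heq
end
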